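/- There exist a constant K > 0 and N ∈ ℕ such that for all n ≥ N and all pairs (z,c) ∈ Ω_n^θ (i.e. z,c ∈ ℕ with z ≤ n^{1/3} θ_n² r and c ≤ n^{2/3} θ_n T r), one has |μ_θ(n,z,c) − z| ≤ K θ_n³ and σ²_θ(n,z,c) ≤ K θ_n² n^{1/3}. (Auxiliary bounds from the proof of Lemma 6.1.) -/

import Mathlib

/-!
Write `a = n^(1/3)`, so that `n = a³` and `n p = 1 + λ θ/a` with `θ/a → 0`; in particular
`n p ∈ [1/2, 3/2]` eventually. The Bonferroni bounds `zp - (zp)²/2 ≤ q ≤ zp` give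
`|(n - c) q - z| ≤ z |np - 1| + n (zp)²/2 + c zp`, and on `Ω` each term is `O(θ³)`: since
`zp = O(θ²/a²)`, the first is `z |λ| θ/a`, the second `O(θ⁴/a)` and the third `O(θ³)`.
The variance is at most `n q ≤ z (np) ≤ 3z/2 = O(θ² a)`.
-/

lemma one_sub_pow_le_one_sub_mul_add_sq {p : ℝ} (hp0 : 0 ≤ p) (hp1 : p ≤ 1) (z : ℕ) :
    (1 - p) ^ z ≤ 1 - z * p + (z * p) ^ 2 / 2 := by
  induction z with
  | zero => norm_num
  | succ z ih =>
    have hz : (0 : ℝ) ≤ z := z.cast_nonneg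
    calc (1 - p) ^ (z + 1) = (1 - p) * (1 - p) ^ z := pow_succ' _ _
      _ ≤ (1 - p) * (1 - z * p + (z * p) ^ 2 / 2) := by gcongr
      _ ≤ 1 - ↑(z + 1) * p + (↑(z + 1) * p) ^ 2 / 2 := by
        push_cast
        nlinarith [mul_nonneg (mul_nonneg hz hz) (pow_nonneg hp0 3), pow_nonneg hp0 2]

lemma mul_sub_sq_le_one_sub_one_sub_pow {p : ℝ} (hp0 : 0 ≤ p) (hp1 : p ≤ 1) (z : ℕ) :
    z * p - (z * p) ^ 2 / 2 ≤ 1 - (1 - p) ^ z := by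
  linarith [one_sub_pow_le_one_sub_mul_add_sq hp0 hp1 z]

lemma one_sub_one_sub_pow_le_mul {p : ℝ} (hp1 : p ≤ 1) (z : ℕ) :
    1 - (1 - p) ^ z ≤ z * p := by
  have := one_add_mul_le_pow (show -2 ≤ -p by linarith) z
  rw [← sub_eq_add_neg] at this
  linarith

lemma abs_sub_mul_sub_le {n c z p q : ℝ} (hn : 0 ≤ n) (hc : 0 ≤ c) (hz : 0 ≤ z)
    (hq : 0 ≤ q) (hq_lo : z * p - (z * p) ^ 2 / 2 ≤ q) (hq_hi : q ≤ z * p) :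
    |(n - c) * q - z| ≤ z * |n * p - 1| + n * (z * p) ^ 2 / 2 + c * (z * p) := by
  have hnq_hi : n * q ≤ n * (z * p) := mul_le_mul_of_nonneg_left hq_hi hn
  have hnq_lo : n * (z * p - (z * p) ^ 2 / 2) ≤ n * q := mul_le_mul_of_nonneg_left hq_lo hn
  have hcq : c * q ≤ c * (z * p) := mul_le_mul_of_nonneg_left hq_hi hc
  have hdev_hi := mul_le_mul_of_nonneg_left (le_abs_self (n * p - 1)) hz
  have hdev_lo := mul_le_mul_of_nonneg_left (neg_abs_le (n * p - 1)) hz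
  rw [abs_le]
  constructor <;> linarith [mul_nonneg hc hq]

lemma sub_mul_mul_one_sub_le {n c q : ℝ} (hc : 0 ≤ c) (hn : 0 ≤ n) (hq0 : 0 ≤ q)
    (hq1 : q ≤ 1) :
    (n - c) * q * (1 - q) ≤ n * q := by
  nlinarith [mul_nonneg (mul_nonneg hc hq0) (sub_nonneg.2 hq1), mul_nonneg (mul_nonneg hn hq0) hq0]

section Scaling

variable {a t lam p : ℝ}

lemma pow_three_mul_prob_mem_Icc (ha : 0 < a) (ht : 0 ≤ t) (hlam : |lam| * (t / a) ≤ 1 / 2)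
    (hp : a ^ 3 * p = 1 + lam * (t / a)) :
    1 / 2 ≤ a ^ 3 * p ∧ a ^ 3 * p ≤ 3 / 2 := by
  have hdev : |lam * (t / a)| ≤ 1 / 2 := by
    rwa [abs_mul, abs_of_nonneg (by positivity : 0 ≤ t / a)]
  obtain ⟨hdev_lo, hdev_hi⟩ := abs_le.1 hdev
  constructor <;> linarith

lemma prob_nonneg_and_le_one (ha3 : 2 ≤ a ^ 3) (hm_lo : 1 / 2 ≤ a ^ 3 * p)
    (hm_hi : a ^ 3 * p ≤ 3 / 2) :
    0 ≤ p ∧ p ≤ 1 := by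
  constructor <;> nlinarith

lemma abs_binomial_mean_sub_le {r T : ℝ} (ha : 0 < a) (ht : 0 ≤ t) (hta : t / a ≤ 1)
    (hlam : |lam| * (t / a) ≤ 1 / 2) (ha3 : 2 ≤ a ^ 3) (hp : a ^ 3 * p = 1 + lam * (t / a))
    {z c : ℕ} (hz : (z : ℝ) ≤ a * t ^ 2 * r) (hc : (c : ℝ) ≤ a ^ 2 * t * T * r) :
    |(a ^ 3 - c) * (1 - (1 - p) ^ z) - z| ≤
      (|lam| * r + 9 / 8 * r ^ 2 + 3 / 2 * T * r ^ 2) * t ^ 3 := by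
  obtain ⟨hm_lo, hm_hi⟩ := pow_three_mul_prob_mem_Icc ha ht hlam hp
  obtain ⟨hp0, hp1⟩ := prob_nonneg_and_le_one ha3 hm_lo hm_hi
  refine (abs_sub_mul_sub_le (by positivity) c.cast_nonneg z.cast_nonneg ?_
    (mul_sub_sq_le_one_sub_one_sub_pow hp0 hp1 z) (one_sub_one_sub_pow_le_mul hp1 z)).trans ?_
  · exact sub_nonneg.2 (pow_le_one₀ (by linarith) (by linarith))
  have hw : a ^ 2 * (z * p) ≤ 3 / 2 * t ^ 2 * r := by
    refine le_of_mul_le_mul_left ?_ ha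
    calc a * (a ^ 2 * (z * p)) = (z : ℝ) * (a ^ 3 * p) := by ring
      _ ≤ (z : ℝ) * (3 / 2) := by gcongr
      _ ≤ a * (3 / 2 * t ^ 2 * r) := by linarith
  have h_dev : z * |a ^ 3 * p - 1| ≤ |lam| * r * t ^ 3 :=
    calc z * |a ^ 3 * p - 1| = z * (|lam| * (t / a)) := by
          rw [hp, add_sub_cancel_left, abs_mul, abs_of_nonneg (by positivity : 0 ≤ t / a)]
      _ ≤ a * t ^ 2 * r * (|lam| * (t / a)) := by gcongr
      _ = |lam| * r * t ^ 3 := by field_simp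
  have h_sq : a ^ 3 * (z * p) ^ 2 / 2 ≤ 9 / 8 * r ^ 2 * t ^ 3 :=
    calc a ^ 3 * (z * p) ^ 2 / 2 = (a ^ 2 * (z * p)) ^ 2 / (2 * a) := by field_simp
      _ ≤ (3 / 2 * t ^ 2 * r) ^ 2 / (2 * a) := by gcongr
      _ = 9 / 8 * r ^ 2 * t ^ 3 * (t / a) := by field_simp; ring
      _ ≤ 9 / 8 * r ^ 2 * t ^ 3 := mul_le_of_le_one_right (by positivity) hta
  have htTr : 0 ≤ t * T * r := by
    refine (mul_nonneg_iff_of_pos_left (pow_pos ha 2)).1 ?_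
    linarith [c.cast_nonneg (α := ℝ)]
  have h_c : c * (z * p) ≤ 3 / 2 * T * r ^ 2 * t ^ 3 :=
    calc c * (z * p) ≤ a ^ 2 * t * T * r * (z * p) := by gcongr
      _ = t * T * r * (a ^ 2 * (z * p)) := by ring
      _ ≤ t * T * r * (3 / 2 * t ^ 2 * r) := by gcongr
      _ = 3 / 2 * T * r ^ 2 * t ^ 3 := by ring
  linarith

lemma binomial_variance_le {r c : ℝ} (ha : 0 < a) (ht : 0 ≤ t)
    (hlam : |lam| * (t / a) ≤ 1 / 2) (ha3 : 2 ≤ a ^ 3) (hp : a ^ 3 * p = 1 + lam * (t / a))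
    (hc : 0 ≤ c) {z : ℕ} (hz : (z : ℝ) ≤ a * t ^ 2 * r) :
    (a ^ 3 - c) * (1 - (1 - p) ^ z) * (1 - (1 - (1 - p) ^ z)) ≤ 3 / 2 * r * t ^ 2 * a := by
  obtain ⟨hm_lo, hm_hi⟩ := pow_three_mul_prob_mem_Icc ha ht hlam hp
  obtain ⟨hp0, hp1⟩ := prob_nonneg_and_le_one ha3 hm_lo hm_hi
  have hq0 : 0 ≤ 1 - (1 - p) ^ z := sub_nonneg.2 (pow_le_one₀ (by linarith) (by linarith))
  have hq1 : 1 - (1 - p) ^ z ≤ 1 := by linarith [pow_nonneg (sub_nonneg.2 hp1) z]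
  calc (a ^ 3 - c) * (1 - (1 - p) ^ z) * (1 - (1 - (1 - p) ^ z))
      ≤ a ^ 3 * (1 - (1 - p) ^ z) := sub_mul_mul_one_sub_le hc (by positivity) hq0 hq1
    _ ≤ a ^ 3 * (z * p) := by gcongr; exact one_sub_one_sub_pow_le_mul hp1 z
    _ = (z : ℝ) * (a ^ 3 * p) := by ring
    _ ≤ (z : ℝ) * (3 / 2) := by gcongr
    _ ≤ 3 / 2 * r * t ^ 2 * a := by linarith

end Scaling

lemma rpow_div_three_eq_pow {x : ℝ} (hx : 0 ≤ x) (k : ℕ) :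
    x ^ ((k : ℝ) / 3) = (x ^ ((1 : ℝ) / 3)) ^ k := by
  rw [← Real.rpow_mul_natCast hx]
  ring_nf

lemma rpow_neg_div_three_eq_inv_pow {x : ℝ} (hx : 0 ≤ x) (k : ℕ) :
    x ^ (-(k : ℝ) / 3) = ((x ^ ((1 : ℝ) / 3)) ^ k)⁻¹ := by
  rw [neg_div, Real.rpow_neg hx, rpow_div_three_eq_pow hx]

lemma rpow_two_thirds {x : ℝ} (hx : 0 ≤ x) :
    x ^ ((2 : ℝ) / 3) = (x ^ ((1 : ℝ) / 3)) ^ 2 := by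
  exact_mod_cast rpow_div_three_eq_pow hx 2

lemma rpow_one_third_pow_three {x : ℝ} (hx : 0 ≤ x) : (x ^ ((1 : ℝ) / 3)) ^ 3 = x := by
  simpa using Real.rpow_inv_natCast_pow hx three_ne_zero

lemma rpow_neg_one_third {x : ℝ} (hx : 0 ≤ x) :
    x ^ (-(1 : ℝ) / 3) = (x ^ ((1 : ℝ) / 3))⁻¹ := by
  simpa only [Nat.cast_one, pow_one] using rpow_neg_div_three_eq_inv_pow hx 1

lemma rpow_one_third_pow_three_mul {x : ℝ} (hx : 0 < x) (lam t : ℝ) :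
    (x ^ ((1 : ℝ) / 3)) ^ 3 * (x⁻¹ + lam * t * x ^ (-(4 : ℝ) / 3)) =
      1 + lam * (t / x ^ ((1 : ℝ) / 3)) := by
  have ha : 0 < x ^ ((1 : ℝ) / 3) := Real.rpow_pos_of_pos hx _
  have h4 : x ^ (-(4 : ℝ) / 3) = ((x ^ ((1 : ℝ) / 3)) ^ 4)⁻¹ := by
    exact_mod_cast rpow_neg_div_three_eq_inv_pow hx.le 4
  have h3 : x⁻¹ = ((x ^ ((1 : ℝ) / 3)) ^ 3)⁻¹ := by rw [rpow_one_third_pow_three hx.le]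
  rw [h3, h4]
  field_simp

open Filter in
theorem stmt_7_general (lam r T : ℝ) (hr : 0 < r) (hT : 0 < T)
    (θ : ℕ → ℝ) (hθpos : ∀ n, 0 < θ n)
    (hθ_small : Filter.Tendsto (fun n : ℕ => θ n * (n : ℝ) ^ (-(1 : ℝ) / 3))
      Filter.atTop (nhds 0))
    (p : ℕ → ℝ) (hp : ∀ n : ℕ, p n = (n : ℝ)⁻¹ + lam * θ n * (n : ℝ) ^ (-(4 : ℝ) / 3))
    (q : ℕ → ℕ → ℝ) (hq : ∀ (n : ℕ) (z : ℕ), q n z = 1 - (1 - p n) ^ z)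
    (μ : ℕ → ℕ → ℕ → ℝ)
    (hμ : ∀ (n : ℕ) (z c : ℕ), μ n z c = ((n : ℝ) - (c : ℝ)) * q n z)
    (σsq : ℕ → ℕ → ℕ → ℝ)
    (hσ : ∀ (n : ℕ) (z c : ℕ), σsq n z c = ((n : ℝ) - (c : ℝ)) * q n z * (1 - q n z)) :
    ∃ K : ℝ, 0 < K ∧ ∃ N : ℕ, ∀ n : ℕ, N ≤ n → ∀ z c : ℕ,
      (z : ℝ) ≤ (n : ℝ) ^ ((1 : ℝ) / 3) * (θ n) ^ 2 * r →
      (c : ℝ) ≤ (n : ℝ) ^ ((2 : ℝ) / 3) * θ n * T * r →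
      |μ n z c - (z : ℝ)| ≤ K * (θ n) ^ 3 ∧
        σsq n z c ≤ K * (θ n) ^ 2 * (n : ℝ) ^ ((1 : ℝ) / 3) := by
  have hlam_small :
      Tendsto (fun n : ℕ => |lam| * (θ n * (n : ℝ) ^ (-(1 : ℝ) / 3))) atTop (nhds 0) := by
    simpa using hθ_small.const_mul |lam|
  obtain ⟨N, hN⟩ := eventually_atTop.1 <| (eventually_ge_atTop 2).and <|
    (hθ_small.eventually (eventually_le_nhds one_pos)).and
      (hlam_small.eventually (eventually_le_nhds one_half_pos))
  refine ⟨|lam| * r + 9 / 8 * r ^ 2 + 3 / 2 * T * r ^ 2 + 3 / 2 * r, by positivity, N,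
    fun n hn z c hz hc => ?_⟩
  obtain ⟨hn2, hta, hlam⟩ := hN n hn
  have hx : (0 : ℝ) < n := by exact_mod_cast (show 0 < n by omega)
  have ht : 0 < θ n := hθpos n
  have hpa := rpow_one_third_pow_three_mul hx lam (θ n)
  rw [← hp] at hpa
  rw [rpow_two_thirds hx.le] at hc
  rw [rpow_neg_one_third hx.le, ← div_eq_mul_inv] at hta hlam
  set a := (n : ℝ) ^ ((1 : ℝ) / 3)
  have ha : 0 < a := Real.rpow_pos_of_pos hx _
  have hna : (n : ℝ) = a ^ 3 := (rpow_one_third_pow_three hx.le).symm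
  have ha3 : 2 ≤ a ^ 3 := by rw [← hna]; exact_mod_cast hn2
  rw [hμ, hσ, hq, hna]
  constructor
  · refine (abs_binomial_mean_sub_le ha ht.le hta hlam ha3 hpa hz hc).trans ?_
    gcongr ?_ * _
    exact le_add_of_nonneg_right (by positivity)
  · refine (binomial_variance_le ha ht.le hlam ha3 hpa c.cast_nonneg hz).trans ?_
    gcongr ?_ * _ * _
    exact le_add_of_nonneg_left (by positivity)

/-- Auxiliary bounds from the proof of Lemma 6.1. Let `θ n > 0`, `θ n → ∞`,
`θ n = o(n^(1/3))`. With `p n = n⁻¹ + λ θ n * n^(-4/3)`, `q n z = 1 - (1 - p n)^z`,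
mean `μ n z c = (n - c) * q n z` and variance
`σ² n z c = (n - c) * q n z * (1 - q n z)` of `Bin(n - c, q n z)`, there exist `K > 0`
and `N` such that for all `n ≥ N` and all `(z, c) ∈ Ω_n^θ` (i.e. `z ≤ n^(1/3) θ_n² r`
and `c ≤ n^(2/3) θ_n T r`), `|μ(n,z,c) - z| ≤ K θ_n³` and `σ²(n,z,c) ≤ K θ_n² n^(1/3)`. -/
theorem stmt_7 (lam r T : ℝ) (hr : 0 < r) (hT : 0 < T)
    (θ : ℕ → ℝ) (hθpos : ∀ n, 0 < θ n)
    (hθ_top : Filter.Tendsto θ Filter.atTop Filter.atTop)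
    (hθ_small : Filter.Tendsto (fun n : ℕ => θ n * (n : ℝ) ^ (-(1 : ℝ) / 3))
      Filter.atTop (nhds 0))
    (p : ℕ → ℝ) (hp : ∀ n : ℕ, p n = (n : ℝ)⁻¹ + lam * θ n * (n : ℝ) ^ (-(4 : ℝ) / 3))
    (q : ℕ → ℕ → ℝ) (hq : ∀ (n : ℕ) (z : ℕ), q n z = 1 - (1 - p n) ^ z)
    (μ : ℕ → ℕ → ℕ → ℝ)
    (hμ : ∀ (n : ℕ) (z c : ℕ), μ n z c = ((n : ℝ) - (c : ℝ)) * q n z)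
    (σsq : ℕ → ℕ → ℕ → ℝ)
    (hσ : ∀ (n : ℕ) (z c : ℕ), σsq n z c = ((n : ℝ) - (c : ℝ)) * q n z * (1 - q n z)) :
    ∃ K : ℝ, 0 < K ∧ ∃ N : ℕ, ∀ n : ℕ, N ≤ n → ∀ z c : ℕ,
      (z : ℝ) ≤ (n : ℝ) ^ ((1 : ℝ) / 3) * (θ n) ^ 2 * r →
      (c : ℝ) ≤ (n : ℝ) ^ ((2 : ℝ) / 3) * θ n * T * r →
      |μ n z c - (z : ℝ)| ≤ K * (θ n) ^ 3 ∧
        σsq n z c ≤ K * (θ n) ^ 2 * (n : ℝ) ^ ((1 : ℝ) / 3) :=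
  stmt_7_general lam r T hr hT θ hθpos hθ_small p hp q hq μ hμ σsq hσ
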